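/- arXiv:2304.02327 — 3 statements merged into one kernel-verified Lean document; each statement's English description precedes it below -/
import Mathlib

section
/- Let d ≥ 1, let n_1, …, n_d be positive integers, and for each μ let A_μ be a complex n_μ × n_μ matrix. Let K be the Kronecker sum of A_d, …, A_1, i.e., the complex matrix indexed by tuples (i_1,…,i_d), (j_1,…,j_d) with entries K_{(i_1,…,i_d),(j_1,…,j_d)} = Σ_{μ=1}^d A_μ(i_μ, j_μ) · Π_{ν≠μ} δ_{i_ν j_ν}. For ℓ ≥ 1 and τ ∈ ℝ, let P_ℓ(τ) be the Kronecker product of φ_ℓ(τA_d), …, φ_ℓ(τA_1), i.e., the matrix with entries P_ℓ(τ)_{(i_1,…,i_d),(j_1,…,j_d)} = Π_{μ=1}^d φ_ℓ(τA_μ)(i_μ, j_μ). Then for every ℓ ≥ 1 there exists a constant C > 0 such that for all τ ∈ [0,1], ‖φ_ℓ(τK) − (ℓ!)^{d−1} P_ℓ(τ)‖ ≤ C τ², where ‖·‖ is any fixed matrix norm. -/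
/-!
Both sides agree to first order in `τ`. Each `φ_ℓ(τX)` is a power series in `τ` with absolutely
summable coefficients, so `φ_ℓ(τX) = I/ℓ! + τ X/(ℓ+1)! + O(τ²)` uniformly for `|τ| ≤ 1`.
Multiplying `d` such entries, the first-order part of `P_ℓ(τ)_{ij}` is
`(ℓ!)^{-d} δ_{ij} + τ (ℓ!)^{1-d} K_{ij}/(ℓ+1)!`: the terms linear in `τ` are exactly the
Kronecker sum. After scaling by `(ℓ!)^{d-1}` this is the first-order part of `φ_ℓ(τK)_{ij}`.
-/

open scoped Matrix

/-- The matrix φ-function, defined by its everywhere-convergent power series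
`φ_ℓ(X) = ∑_{i=0}^∞ X^i / (i+ℓ)!`. -/
noncomputable def phiFun {n : Type*} [Fintype n] [DecidableEq n] (ℓ : ℕ)
    (X : Matrix n n ℂ) : Matrix n n ℂ :=
  ∑' i : ℕ, ((i + ℓ).factorial : ℂ)⁻¹ • X ^ i

attribute [local instance] Matrix.normedAddCommGroup

attribute [local instance] Matrix.normedSpace

open Filter Asymptotics Metric

section PowerSeries

variable {𝕜 E : Type*} [NormedField 𝕜] [NormedAddCommGroup E] [NormedSpace 𝕜 E] [CompleteSpace E]

theorem tsum_pow_smul_sub_first_order_isBigO (c : ℕ → E) (hc : Summable fun k => ‖c k‖) :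
    (fun x : 𝕜 => ∑' k, x ^ k • c k - (c 0 + x • c 1)) =O[𝓟 (closedBall 0 1)]
      fun x => x ^ 2 := by
  refine isBigO_principal.2 ⟨∑' k, ‖c (k + 2)‖, fun x hx => ?_⟩
  have hx : ‖x‖ ≤ 1 := mem_closedBall_zero_iff.1 hx
  have hle : ∀ k (v : E), ‖x ^ k • v‖ ≤ ‖v‖ := fun k v => by
    rw [norm_smul, norm_pow]
    exact mul_le_of_le_one_left (norm_nonneg _) (pow_le_one₀ (norm_nonneg _) hx)
  have hrem : ∑' k, x ^ k • c k - (c 0 + x • c 1) = x ^ 2 • ∑' k, x ^ k • c (k + 2) := by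
    rw [← (Summable.of_norm_bounded hc fun k => hle k (c k)).sum_add_tsum_nat_add 2,
      ← tsum_const_smul'']
    simp [Finset.sum_range_succ, pow_add, mul_smul, smul_comm (x ^ 2)]
  have htail : ‖∑' k, x ^ k • c (k + 2)‖ ≤ ∑' k, ‖c (k + 2)‖ :=
    tsum_of_norm_bounded ((summable_nat_add_iff 2).2 hc).hasSum fun k => hle k _
  rw [hrem, norm_smul, mul_comm]
  exact mul_le_mul_of_nonneg_right htail (norm_nonneg _)

end PowerSeries

section ProductExpansion

variable {𝕜 R ι : Type*} [NormedField 𝕜] [NormedCommRing R] [NormedAlgebra 𝕜 R] [DecidableEq ι]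
  {l : Filter 𝕜}

theorem prod_sub_first_order_isBigO (hl : (fun x : 𝕜 => x) =O[l] fun _ => (1 : 𝕜))
    (s : Finset ι) {f : ι → 𝕜 → R} {a b : ι → R}
    (hf : ∀ μ ∈ s, (fun x => f μ x - (a μ + x • b μ)) =O[l] fun x => x ^ 2) :
    (fun x => ∏ μ ∈ s, f μ x - (∏ μ ∈ s, a μ + x • ∑ μ ∈ s, b μ * ∏ ν ∈ s.erase μ, a ν))
      =O[l] fun x => x ^ 2 := by
  induction s using Finset.induction_on with
  | empty => simpa using isBigO_zero _ _
  | insert μ s hμ ih =>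
    rw [Finset.forall_mem_insert] at hf
    set B := ∑ ν ∈ s, b ν * ∏ κ ∈ s.erase ν, a κ
    have hsum : ∑ ν ∈ insert μ s, b ν * ∏ κ ∈ (insert μ s).erase ν, a κ =
        b μ * ∏ κ ∈ s, a κ + a μ * B := by
      rw [Finset.sum_insert hμ, Finset.erase_insert hμ, Finset.mul_sum]
      congr 1
      refine Finset.sum_congr rfl fun ν hν => ?_
      rw [Finset.erase_insert_of_ne (ne_of_mem_of_not_mem hν hμ).symm,
        Finset.prod_insert fun h => hμ (Finset.mem_of_mem_erase h)]
      ring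
    have hsq : (fun x : 𝕜 => x ^ 2) =O[l] fun _ => (1 : 𝕜) := by simpa using hl.pow 2
    have haffine : ∀ c d : R, (fun x : 𝕜 => c + x • d) =O[l] fun _ => (1 : 𝕜) := fun c d =>
      (isBigO_const_const c one_ne_zero l).add
        ((hl.smul (isBigO_const_const d one_ne_zero l)).congr_right fun _ => mul_one 1)
    have hfμ : (fun x => f μ x) =O[l] fun _ => (1 : 𝕜) :=
      ((hf.1.trans hsq).add (haffine _ _)).congr_left fun x => sub_add_cancel _ _
    have hrest := (hfμ.mul (ih hf.2)).congr_right fun x => one_mul (x ^ 2)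
    have hfactor := (hf.1.mul (haffine (∏ κ ∈ s, a κ) B)).congr_right fun x => mul_one (x ^ 2)
    have hcross : (fun x : 𝕜 => x ^ 2 • (b μ * B)) =O[l] fun x => x ^ 2 :=
      IsBigO.of_bound ‖b μ * B‖ (Eventually.of_forall fun x => by rw [norm_smul, mul_comm])
    -- `f F - (first-order part) = f (F - L) + (f - (a + x b)) L + x² b B`, with `L` the
    -- first-order part of the product `F` over `s`
    refine ((hrest.add hfactor).add hcross).congr_left fun x => ?_
    rw [Finset.prod_insert hμ, Finset.prod_insert hμ, hsum]
    simp only [Algebra.smul_def, map_pow]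
    ring

end ProductExpansion

namespace Matrix

variable {l m n α : Type*} [Fintype l] [Fintype m] [Fintype n] [NormedRing α]

theorem entrywise_sup_norm_mul_le (A : Matrix l m α) (B : Matrix m n α) :
    ‖A * B‖ ≤ Fintype.card m * (‖A‖ * ‖B‖) := by
  refine (norm_le_iff (by positivity)).2 fun i k => ?_
  calc ‖(A * B) i k‖ ≤ ∑ j, ‖A i j‖ * ‖B j k‖ :=
        (norm_sum_le _ _).trans (Finset.sum_le_sum fun j _ => norm_mul_le _ _)
    _ ≤ ∑ _j : m, ‖A‖ * ‖B‖ := Finset.sum_le_sum fun j _ =>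
        mul_le_mul (norm_entry_le_entrywise_sup_norm A) (norm_entry_le_entrywise_sup_norm B)
          (norm_nonneg _) (norm_nonneg _)
    _ = Fintype.card m * (‖A‖ * ‖B‖) := by simp

theorem entrywise_sup_norm_pow_le [DecidableEq m] [NormOneClass α] (X : Matrix m m α) (k : ℕ) :
    ‖X ^ k‖ ≤ (Fintype.card m * ‖X‖) ^ k := by
  induction k with
  | zero =>
    rw [pow_zero, pow_zero]
    refine (norm_le_iff zero_le_one).2 fun i j => ?_
    rw [one_apply]
    split_ifs <;> simp
  | succ k ih =>
    calc ‖X ^ (k + 1)‖ ≤ Fintype.card m * (‖X ^ k‖ * ‖X‖) := by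
          rw [pow_succ]; exact entrywise_sup_norm_mul_le _ _
      _ ≤ Fintype.card m * ((Fintype.card m * ‖X‖) ^ k * ‖X‖) := by gcongr
      _ = (Fintype.card m * ‖X‖) ^ (k + 1) := by ring

theorem prod_smul_one_apply {ι R : Type*} [Fintype ι] [CommSemiring R] {κ : ι → Type*}
    [∀ μ, Fintype (κ μ)] [∀ μ, DecidableEq (κ μ)] (c : R) (i j : ∀ μ, κ μ) :
    ∏ μ, (c • (1 : Matrix (κ μ) (κ μ) R)) (i μ) (j μ) =
      c ^ Fintype.card ι * (1 : Matrix (∀ μ, κ μ) (∀ μ, κ μ) R) i j := by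
  simp only [smul_apply, smul_eq_mul, Finset.prod_mul_distrib, Finset.prod_const,
    Finset.card_univ, one_apply, Fintype.prod_boole, funext_iff]

end Matrix

section PhiFunction

variable {m : Type*} [Fintype m] [DecidableEq m]

theorem summable_norm_inv_factorial_smul_pow (ℓ : ℕ) (X : Matrix m m ℂ) :
    Summable fun k => ‖((k + ℓ).factorial : ℂ)⁻¹ • X ^ k‖ := by
  refine (Real.summable_pow_div_factorial (Fintype.card m * ‖X‖)).of_nonneg_of_le
    (fun _ => norm_nonneg _) fun k => ?_
  rw [norm_smul, norm_inv, Complex.norm_natCast, inv_mul_eq_div]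
  gcongr
  · exact X.entrywise_sup_norm_pow_le k
  exact Nat.le_add_right k ℓ

theorem phiFun_smul (ℓ : ℕ) (X : Matrix m m ℂ) (τ : ℝ) :
    phiFun ℓ (τ • X) = ∑' k, τ ^ k • (((k + ℓ).factorial : ℂ)⁻¹ • X ^ k) := by
  simp only [phiFun, smul_pow, smul_comm (τ ^ _)]

theorem phiFun_smul_sub_first_order_isBigO (ℓ : ℕ) (X : Matrix m m ℂ) :
    (fun τ : ℝ => phiFun ℓ (τ • X) -
        ((ℓ.factorial : ℂ)⁻¹ • 1 + τ • ((ℓ + 1).factorial : ℂ)⁻¹ • X))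
      =O[𝓟 (closedBall 0 1)] fun τ => τ ^ 2 := by
  have := tsum_pow_smul_sub_first_order_isBigO (𝕜 := ℝ) _
    (summable_norm_inv_factorial_smul_pow ℓ X)
  simp only [pow_zero, zero_add, pow_one, add_comm 1 ℓ] at this
  simp only [phiFun_smul]
  exact this

end PhiFunction

section KroneckerSum

variable {ι : Type*} [Fintype ι] [DecidableEq ι] {κ : ι → Type*} [∀ μ, DecidableEq (κ μ)]
  {A : ∀ μ, Matrix (κ μ) (κ μ) ℂ} {K : Matrix (∀ μ, κ μ) (∀ μ, κ μ) ℂ}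

theorem sum_smul_apply_mul_prod_erase_smul_one_apply
    (hK : ∀ i j, K i j =
      ∑ μ, A μ (i μ) (j μ) * ∏ ν ∈ Finset.univ.erase μ, (if i ν = j ν then (1 : ℂ) else 0))
    (c c' : ℂ) (i j : ∀ μ, κ μ) :
    ∑ μ, (c' • A μ) (i μ) (j μ) *
        ∏ ν ∈ Finset.univ.erase μ, (c • (1 : Matrix (κ ν) (κ ν) ℂ)) (i ν) (j ν) =
      c' * c ^ (Fintype.card ι - 1) * K i j := by
  rw [hK, Finset.mul_sum]
  refine Finset.sum_congr rfl fun μ _ => ?_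
  simp only [Matrix.smul_apply, smul_eq_mul, Finset.prod_mul_distrib, Finset.prod_const,
    Finset.card_erase_of_mem (Finset.mem_univ μ), Finset.card_univ, Matrix.one_apply]
  ring

theorem phiFun_kroneckerSum_sub_apply_isBigO [Nonempty ι] [∀ μ, Fintype (κ μ)]
    (hK : ∀ i j, K i j =
      ∑ μ, A μ (i μ) (j μ) * ∏ ν ∈ Finset.univ.erase μ, (if i ν = j ν then (1 : ℂ) else 0))
    (ℓ : ℕ) (i j : ∀ μ, κ μ) :
    (fun τ : ℝ => phiFun ℓ (τ • K) i j -
        (ℓ.factorial : ℂ) ^ (Fintype.card ι - 1) * ∏ μ, phiFun ℓ (τ • A μ) (i μ) (j μ))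
      =O[𝓟 (closedBall 0 1)] fun τ => τ ^ 2 := by
  have hl : (fun τ : ℝ => τ) =O[𝓟 (closedBall 0 1)] fun _ => (1 : ℝ) :=
    isBigO_principal.2 ⟨1, fun τ hτ => by simpa using hτ⟩
  have hφK := isBigO_pi.1 (isBigO_pi.1 (phiFun_smul_sub_first_order_isBigO ℓ K) i) j
  have hφP := prod_sub_first_order_isBigO hl Finset.univ fun μ _ =>
    isBigO_pi.1 (isBigO_pi.1 (phiFun_smul_sub_first_order_isBigO ℓ (A μ)) (i μ)) (j μ)
  refine (hφK.sub (hφP.const_mul_left ((ℓ.factorial : ℂ) ^ (Fintype.card ι - 1)))).congr_left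
    fun τ => ?_
  obtain ⟨e, he⟩ : ∃ e, Fintype.card ι = e + 1 :=
    Nat.exists_eq_add_one.2 Fintype.card_pos
  have hcancel : (ℓ.factorial : ℂ) ^ e * (ℓ.factorial : ℂ)⁻¹ ^ e = 1 := by
    rw [← mul_pow, mul_inv_cancel₀ (Nat.cast_ne_zero.2 ℓ.factorial_ne_zero), one_pow]
  rw [Matrix.prod_smul_one_apply, sum_smul_apply_mul_prod_erase_smul_one_apply hK, he,
    Nat.add_sub_cancel]
  simp only [Matrix.sub_apply, Matrix.add_apply, Matrix.smul_apply, smul_eq_mul,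
    Complex.real_smul]
  linear_combination ((ℓ.factorial : ℂ)⁻¹ * (1 : Matrix (∀ μ, κ μ) (∀ μ, κ μ) ℂ) i j +
    τ * ((ℓ + 1).factorial : ℂ)⁻¹ * K i j) * hcancel

end KroneckerSum

theorem phi_direction_splitting_general (d : ℕ) (hd : 1 ≤ d) (n : Fin d → ℕ)
    (A : ∀ μ : Fin d, Matrix (Fin (n μ)) (Fin (n μ)) ℂ)
    (K : Matrix (∀ μ, Fin (n μ)) (∀ μ, Fin (n μ)) ℂ)
    (hK : ∀ i j, K i j =
      ∑ μ, A μ (i μ) (j μ) *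
        ∏ ν ∈ Finset.univ.erase μ, (if i ν = j ν then (1 : ℂ) else 0))
    (P : ℕ → ℝ → Matrix (∀ μ, Fin (n μ)) (∀ μ, Fin (n μ)) ℂ)
    (hP : ∀ ℓ τ i j, P ℓ τ i j = ∏ μ, phiFun ℓ (τ • A μ) (i μ) (j μ))
    (ℓ : ℕ) :
    ∃ C > 0, ∀ τ ∈ Set.Icc (0 : ℝ) 1,
      ‖phiFun ℓ (τ • K) - ((ℓ.factorial : ℂ) ^ (d - 1)) • P ℓ τ‖ ≤ C * τ ^ 2 := by
  have : Nonempty (Fin d) := ⟨⟨0, hd⟩⟩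
  have hentry : ∀ i j,
      (fun τ : ℝ => (phiFun ℓ (τ • K) - (ℓ.factorial : ℂ) ^ (d - 1) • P ℓ τ) i j)
        =O[𝓟 (closedBall 0 1)] fun τ => τ ^ 2 := fun i j =>
    (phiFun_kroneckerSum_sub_apply_isBigO hK ℓ i j).congr_left fun τ => by
      simp [hP, Fintype.card_fin]
  obtain ⟨C, hC, hbound⟩ := (isBigO_pi.2 fun i => isBigO_pi.2 (hentry i)).exists_pos
  refine ⟨C, hC, fun τ hτ => ?_⟩
  have hτ' : τ ∈ closedBall (0 : ℝ) 1 := by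
    rw [Real.closedBall_zero_eq_Icc]
    exact Set.Icc_subset_Icc (by norm_num) le_rfl hτ
  have h := isBigOWith_principal.1 hbound τ hτ'
  rwa [norm_pow, Real.norm_eq_abs, sq_abs] at h

theorem phi_direction_splitting (d : ℕ) (hd : 1 ≤ d) (n : Fin d → ℕ)
    (hn : ∀ μ, 1 ≤ n μ)
    (A : ∀ μ : Fin d, Matrix (Fin (n μ)) (Fin (n μ)) ℂ)
    (K : Matrix (∀ μ, Fin (n μ)) (∀ μ, Fin (n μ)) ℂ)
    (hK : ∀ i j, K i j =
      ∑ μ, A μ (i μ) (j μ) *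
        ∏ ν ∈ Finset.univ.erase μ, (if i ν = j ν then (1 : ℂ) else 0))
    (P : ℕ → ℝ → Matrix (∀ μ, Fin (n μ)) (∀ μ, Fin (n μ)) ℂ)
    (hP : ∀ ℓ τ i j, P ℓ τ i j = ∏ μ, phiFun ℓ (τ • A μ) (i μ) (j μ))
    (ℓ : ℕ) (hℓ : 1 ≤ ℓ) :
    ∃ C > 0, ∀ τ ∈ Set.Icc (0 : ℝ) 1,
      ‖phiFun ℓ (τ • K) - ((ℓ.factorial : ℂ) ^ (d - 1)) • P ℓ τ‖ ≤ C * τ ^ 2 :=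
  phi_direction_splitting_general d hd n A K hK P hP ℓ
end

section
/- For every square complex matrix X and every integer ℓ ≥ 1, the integral definition and the series definition of the matrix φ-function agree: (1/(ℓ−1)!) ∫_0^1 e^{(1−θ)X} θ^{ℓ−1} dθ = Σ_{i=0}^∞ X^i/(i+ℓ)!. -/
open scoped Matrix

attribute [local instance] Matrix.normedAddCommGroup Matrix.normedSpace

/-!
Expand `e^{(1-θ)X} = ∑ (1-θ)^i X^i / i!` and integrate term by term against `θ^m`; this is
dominated convergence, since the norms of `X^i / i!` are summable and `0 ≤ θ^m (1-θ)^i ≤ 1` on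
`[0, 1]`. Each term is then a Beta integral, `∫₀¹ θ^m (1-θ)^i dθ = m! i! / (m+i+1)!`, and with
`m = ℓ - 1` the factor `m!` cancels against the normalisation, leaving `X^i / (i+ℓ)!`.
-/

open Nat
open scoped Interval

theorem integral_pow_mul_one_sub_pow (m i : ℕ) :
    ∫ x in (0 : ℝ)..1, x ^ m * (1 - x) ^ i = (m ! * i ! : ℝ) / (m + i + 1)! := by
  have hpos (k : ℕ) : 0 < ((k : ℂ) + 1).re := by
    rw [Complex.add_re, Complex.natCast_re, Complex.one_re]
    positivity
  have hbeta := Complex.betaIntegral_eq_Gamma_mul_div _ _ (hpos m) (hpos i)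
  have hsum : (m + 1 : ℂ) + (i + 1) = ((m + i + 1 : ℕ) : ℂ) + 1 := by push_cast; ring
  rw [hsum, Complex.betaIntegral] at hbeta
  simp only [add_sub_cancel_right, Complex.cpow_natCast, Complex.Gamma_nat_eq_factorial] at hbeta
  apply Complex.ofReal_injective
  rw [← intervalIntegral.integral_ofReal]
  push_cast
  exact hbeta

theorem norm_pow_mul_one_sub_pow_le_one {t : ℝ} (ht : t ∈ Set.Icc (0 : ℝ) 1) (m i : ℕ) :
    ‖t ^ m * (1 - t) ^ i‖ ≤ 1 := by
  obtain ⟨h0, h1⟩ := ht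
  rw [Real.norm_of_nonneg (by positivity)]
  exact mul_le_one₀ (pow_le_one₀ h0 h1) (by positivity) (pow_le_one₀ (by linarith) (by linarith))

open MeasureTheory in
theorem hasSum_intervalIntegral_smul_of_summable_norm {ι E : Type*} [Countable ι]
    [NormedAddCommGroup E] [NormedSpace ℝ E] [CompleteSpace E]
    {f : ι → ℝ → ℝ} {c : ι → E} {g : ℝ → E} {a b : ℝ}
    (hf : ∀ i, Continuous (f i)) (hf_le : ∀ i, ∀ t ∈ Ι a b, ‖f i t‖ ≤ 1)
    (hc : Summable fun i => ‖c i‖) (hg : ∀ t ∈ Ι a b, HasSum (fun i => f i t • c i) (g t)) :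
    HasSum (fun i => (∫ t in a..b, f i t) • c i) (∫ t in a..b, g t) := by
  have hpull (i : ι) : (∫ t in a..b, f i t) • c i = ∫ t in a..b, f i t • c i :=
    (intervalIntegral.integral_smul_const _ _).symm
  simp only [hpull]
  refine intervalIntegral.hasSum_integral_of_dominated_convergence (fun i _ => ‖c i‖)
    (fun i => ((hf i).smul continuous_const).aestronglyMeasurable) (fun i => ?_)
    (ae_of_all _ fun _ _ => hc) intervalIntegrable_const (ae_of_all _ hg)
  refine ae_of_all _ fun t ht => ?_
  rw [norm_smul]
  exact mul_le_of_le_one_left (norm_nonneg _) (hf_le i t ht)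

namespace Matrix

variable {n 𝕂 : Type*} [Fintype n] [DecidableEq n] [RCLike 𝕂]

-- The entrywise sup norm is not submultiplicative; the `ℓ∞` operator norm has the same
-- topology and makes matrices a normed algebra.
theorem hasSum_exp (X : Matrix n n 𝕂) :
    HasSum (fun i => (i ! : 𝕂)⁻¹ • X ^ i) (NormedSpace.exp X) :=
  open scoped Norms.Operator in NormedSpace.exp_series_hasSum_exp' X

theorem summable_norm_expSeries (X : Matrix n n 𝕂) :
    Summable fun i => ‖(i ! : 𝕂)⁻¹ • X ^ i‖ :=
  summable_norm_iff.mpr X.hasSum_exp.summable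

theorem hasSum_integral_pow_smul_exp (X : Matrix n n 𝕂) (m : ℕ) :
    HasSum (fun i => (∫ θ in (0 : ℝ)..1, θ ^ m * (1 - θ) ^ i) • ((i ! : 𝕂)⁻¹ • X ^ i))
      (∫ θ in (0 : ℝ)..1, θ ^ m • NormedSpace.exp ((1 - θ) • X)) := by
  refine hasSum_intervalIntegral_smul_of_summable_norm (fun i => by fun_prop)
    (fun i t ht => norm_pow_mul_one_sub_pow_le_one ?_ m i) X.summable_norm_expSeries
    (fun t _ => ?_)
  · rw [Set.uIoc_of_le zero_le_one] at ht
    exact Set.Ioc_subset_Icc_self ht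
  · have hterm : (fun i => (t ^ m * (1 - t) ^ i) • ((i ! : 𝕂)⁻¹ • X ^ i)) =
        fun i => t ^ m • ((i ! : 𝕂)⁻¹ • ((1 - t) • X) ^ i) := by
      funext i
      rw [smul_pow, smul_comm _ ((1 - t) ^ i), mul_smul]
    rw [hterm]
    exact ((1 - t) • X).hasSum_exp.const_smul (t ^ m)

end Matrix

theorem phi_integral_eq_series {n : Type*} [Fintype n] [DecidableEq n]
    (X : Matrix n n ℂ) (ℓ : ℕ) (hℓ : 1 ≤ ℓ) :
    ((ℓ - 1).factorial : ℂ)⁻¹ •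
        ∫ θ in (0 : ℝ)..1, θ ^ (ℓ - 1) • NormedSpace.exp ((1 - θ) • X) =
      phiFun ℓ X := by
  obtain ⟨m, rfl⟩ : ∃ m, ℓ = m + 1 := ⟨ℓ - 1, by omega⟩
  rw [Nat.add_sub_cancel, ← ((X.hasSum_integral_pow_smul_exp m).const_smul _).tsum_eq, phiFun]
  refine tsum_congr fun i => ?_
  rw [integral_pow_mul_one_sub_pow, ← Complex.coe_smul, smul_smul, smul_smul]
  congr 1
  rw [show m + i + 1 = i + (m + 1) by ring]
  push_cast
  field_simp [Nat.factorial_ne_zero]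
end

section
/- Let X be a square complex matrix and ℓ ≥ 1 an integer. Then the following squaring recurrence holds: φ_ℓ(2X) = (1/2^ℓ) [ e^X φ_ℓ(X) + Σ_{k=1}^{ℓ} φ_k(X)/(ℓ−k)! ]. -/
/-!
Both sides are power series in `X`, so it suffices to compare the coefficients of `X ^ m`.
Multiplied by `(m + ℓ)!`, the coefficient on the left becomes `2 ^ (m + ℓ) = ∑_q C(m + ℓ, q)`.
The Cauchy product `e^X φ_ℓ(X)` contributes the binomial coefficients with `q ≤ m`, and the term
`φ_k(X) / (ℓ - k)!` contributes the one with `q = m + k`.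
-/

open scoped Matrix

open Finset
open scoped Nat

theorem sum_range_choose_add_sum_Icc_choose (m ℓ : ℕ) :
    ∑ p ∈ range (m + 1), (m + ℓ).choose p + ∑ k ∈ Icc 1 ℓ, (m + ℓ).choose (m + k) =
      2 ^ (m + ℓ) := by
  rw [← Nat.sum_range_choose, ← Ico_add_one_right_eq_Icc, sum_Ico_add, Nat.add_comm 1 m,
    show ℓ + 1 + m = m + ℓ + 1 by omega, range_eq_Ico, range_eq_Ico,
    sum_Ico_consecutive _ (Nat.zero_le _) (by omega)]

section Coefficients

variable {K : Type*} [Field K] [CharZero K]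

theorem inv_factorial_mul_inv_factorial_of_add_eq {a b N : ℕ} (h : a + b = N) :
    (a ! : K)⁻¹ * (b ! : K)⁻¹ = N.choose a / N ! := by
  subst h
  rw [Nat.cast_add_choose, div_div_cancel_left' (Nat.cast_ne_zero.2 (Nat.factorial_ne_zero _)),
    mul_inv]

theorem two_pow_div_factorial_add_eq (m ℓ : ℕ) :
    (2 : K) ^ (m + ℓ) / (m + ℓ)! =
      ∑ pq ∈ antidiagonal m, (pq.1 ! : K)⁻¹ * ((pq.2 + ℓ)! : K)⁻¹ +
        ∑ k ∈ Icc 1 ℓ, ((ℓ - k)! : K)⁻¹ * ((m + k)! : K)⁻¹ := by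
  have h_cauchy : ∀ pq ∈ antidiagonal m,
      (pq.1 ! : K)⁻¹ * ((pq.2 + ℓ)! : K)⁻¹ = (m + ℓ).choose pq.1 / (m + ℓ)! := by
    intro pq hpq
    rw [HasAntidiagonal.mem_antidiagonal] at hpq
    exact inv_factorial_mul_inv_factorial_of_add_eq (by omega)
  have h_correction : ∀ k ∈ Icc 1 ℓ,
      ((ℓ - k)! : K)⁻¹ * ((m + k)! : K)⁻¹ = (m + ℓ).choose (m + k) / (m + ℓ)! := by
    intro k hk
    rw [mul_comm]
    exact inv_factorial_mul_inv_factorial_of_add_eq (by rw [mem_Icc] at hk; omega)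
  rw [sum_congr rfl h_cauchy, sum_congr rfl h_correction,
    Nat.sum_antidiagonal_eq_sum_range_succ (fun p _ => ((m + ℓ).choose p : K) / (m + ℓ)!),
    ← sum_div, ← sum_div, ← add_div]
  exact_mod_cast congrArg (fun N : ℕ => (N : K) / (m + ℓ)!)
    (sum_range_choose_add_sum_Icc_choose m ℓ).symm

end Coefficients

section PowerSeries

variable {𝕂 A : Type*} [RCLike 𝕂] [NormedRing A] [NormedAlgebra 𝕂 A]

theorem summable_norm_inv_factorial_add_smul_pow (ℓ : ℕ) (x : A) :
    Summable fun i => ‖((i + ℓ)! : 𝕂)⁻¹ • x ^ i‖ := by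
  refine (NormedSpace.norm_expSeries_summable' (𝕂 := 𝕂) x).of_nonneg_of_le
    (fun _ => norm_nonneg _) fun i => ?_
  rw [norm_smul, norm_smul, norm_inv, norm_inv, RCLike.norm_natCast, RCLike.norm_natCast]
  gcongr
  exact Nat.le_add_right i ℓ

theorem hasSum_sum_antidiagonal_smul_pow [CompleteSpace A] {a b : ℕ → 𝕂} {x : A}
    (ha : Summable fun i => ‖a i • x ^ i‖) (hb : Summable fun i => ‖b i • x ^ i‖) :
    HasSum (fun m => (∑ pq ∈ antidiagonal m, a pq.1 * b pq.2) • x ^ m)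
      ((∑' i, a i • x ^ i) * ∑' i, b i • x ^ i) := by
  have h_term : ∀ m, (∑ pq ∈ antidiagonal m, a pq.1 * b pq.2) • x ^ m =
      ∑ pq ∈ antidiagonal m, (a pq.1 • x ^ pq.1) * (b pq.2 • x ^ pq.2) := by
    intro m
    rw [sum_smul]
    refine sum_congr rfl fun pq hpq => ?_
    rw [smul_mul_smul_comm, ← pow_add, HasAntidiagonal.mem_antidiagonal.1 hpq]
  simp_rw [h_term]
  rw [tsum_mul_tsum_eq_tsum_sum_antidiagonal_of_summable_norm ha hb]
  exact (summable_norm_sum_mul_antidiagonal_of_summable_norm ha hb).of_norm.hasSum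

theorem two_pow_smul_tsum_inv_factorial_add_smul_two_smul_pow [CompleteSpace A] (ℓ : ℕ) (x : A) :
    (2 : 𝕂) ^ ℓ • ∑' i, ((i + ℓ)! : 𝕂)⁻¹ • ((2 : 𝕂) • x) ^ i =
      NormedSpace.exp x * ∑' i, ((i + ℓ)! : 𝕂)⁻¹ • x ^ i +
        ∑ k ∈ Icc 1 ℓ, ((ℓ - k)! : 𝕂)⁻¹ • ∑' i, ((i + k)! : 𝕂)⁻¹ • x ^ i := by
  have h_lhs : HasSum (fun m => ((2 : 𝕂) ^ (m + ℓ) / (m + ℓ)!) • x ^ m)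
      ((2 : 𝕂) ^ ℓ • ∑' i, ((i + ℓ)! : 𝕂)⁻¹ • ((2 : 𝕂) • x) ^ i) := by
    refine ((summable_norm_inv_factorial_add_smul_pow ℓ ((2 : 𝕂) • x)).of_norm.hasSum.const_smul
      ((2 : 𝕂) ^ ℓ)).congr_fun fun m => ?_
    rw [smul_pow, smul_smul, smul_smul, pow_add]
    congr 1
    ring
  have h_exp : HasSum (fun m => (∑ pq ∈ antidiagonal m,
        (pq.1 ! : 𝕂)⁻¹ * ((pq.2 + ℓ)! : 𝕂)⁻¹) • x ^ m)
      (NormedSpace.exp x * ∑' i, ((i + ℓ)! : 𝕂)⁻¹ • x ^ i) := by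
    rw [congr_fun (NormedSpace.exp_eq_tsum 𝕂) x]
    -- Elaborated without the expected type: unifying against it first times out.
    exact (hasSum_sum_antidiagonal_smul_pow (NormedSpace.norm_expSeries_summable' (𝕂 := 𝕂) x)
      (summable_norm_inv_factorial_add_smul_pow ℓ x) :)
  have h_correction : HasSum (fun m => (∑ k ∈ Icc 1 ℓ,
        ((ℓ - k)! : 𝕂)⁻¹ * ((m + k)! : 𝕂)⁻¹) • x ^ m)
      (∑ k ∈ Icc 1 ℓ, ((ℓ - k)! : 𝕂)⁻¹ • ∑' i, ((i + k)! : 𝕂)⁻¹ • x ^ i) := by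
    simp_rw [sum_smul, mul_smul]
    exact hasSum_sum fun k _ =>
      (summable_norm_inv_factorial_add_smul_pow k x).of_norm.hasSum.const_smul _
  refine h_lhs.unique ((h_exp.add h_correction).congr_fun fun m => ?_)
  rw [← add_smul, two_pow_div_factorial_add_eq]

end PowerSeries

theorem phi_squaring_recurrence_general {n : Type*} [Fintype n] [DecidableEq n]
    (X : Matrix n n ℂ) (ℓ : ℕ) :
    phiFun ℓ ((2 : ℂ) • X) =
      ((2 : ℂ) ^ ℓ)⁻¹ •
        (NormedSpace.exp X * phiFun ℓ X +
          ∑ k ∈ Finset.Icc 1 ℓ, ((ℓ - k).factorial : ℂ)⁻¹ • phiFun k X) := by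
  -- Any Banach algebra norm on matrices will do; the statement itself involves none.
  let := Matrix.linftyOpNormedRing (n := n) (α := ℂ)
  let := Matrix.linftyOpNormedAlgebra (n := n) (α := ℂ) (R := ℂ)
  rw [eq_inv_smul_iff₀ (pow_ne_zero ℓ two_ne_zero)]
  exact two_pow_smul_tsum_inv_factorial_add_smul_two_smul_pow ℓ X

theorem phi_squaring_recurrence {n : Type*} [Fintype n] [DecidableEq n]
    (X : Matrix n n ℂ) (ℓ : ℕ) (hℓ : 1 ≤ ℓ) :
    phiFun ℓ ((2 : ℂ) • X) =
      ((2 : ℂ) ^ ℓ)⁻¹ •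
        (NormedSpace.exp X * phiFun ℓ X +
          ∑ k ∈ Finset.Icc 1 ℓ, ((ℓ - k).factorial : ℂ)⁻¹ • phiFun k X) :=
  phi_squaring_recurrence_general X ℓ
end
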